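/- arXiv:1001.4703 — 2 statements merged into one kernel-verified Lean document; each statement's English description precedes it below -/
import Mathlib

section
/- The function x ↦ log x + 1/x is nondecreasing on [1, ∞). Consequently, if Q is a symmetric n×n matrix with eigenvalues ≥ 0 and A, V are n×k matrices with orthonormal columns where V's columns are eigenvectors of Q for its k largest eigenvalues, then log det(AᵀQA + I_k) + Tr((AᵀQA + I_k)⁻¹) ≤ log det(VᵀQV + I_k) + Tr((VᵀQV + I_k)⁻¹). -/
open Matrix Set

/-!
Write `Q = U diag(λ) Uᵀ` with `λ` decreasing and put `B = Uᵀ A`, so that `AᵀQA = Bᵀ diag(λ) B`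
has eigenvalues `ν₁ ≥ … ≥ ν_k ≥ 0`, while `VᵀQV = diag(λ₁, …, λ_k)`. Both sides are then
`∑ᵢ f (1 + μᵢ)` with `f x = log x + 1/x` and `μ` the respective eigenvalues, so it suffices that
`f` is monotone on `[1, ∞)` and that `νᵢ ≤ λᵢ` (Cauchy interlacing). The latter is a dimension
count: if `W` diagonalizes `Bᵀ diag(λ) B`, some nonzero `c` supported on the first `i` coordinates
makes `y = B W c` vanish on the first `i - 1` coordinates, and the Rayleigh quotient
`yᵀ diag(λ) y / yᵀy = cᵀ diag(ν) c / cᵀc` is then both `≥ νᵢ` and `≤ λᵢ`.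
-/

theorem monotoneOn_log_add_one_div : MonotoneOn (fun x : ℝ => Real.log x + 1 / x) (Ici 1) := by
  intro x hx y hy hxy
  have hx0 : 0 < x := one_pos.trans_le hx
  have hy0 : 0 < y := hx0.trans_le hxy
  -- `log (y / x) ≥ 1 - x / y = (y - x) / y ≥ (y - x) / (x y) = 1 / x - 1 / y`
  have hlog : 1 - x / y ≤ Real.log y - Real.log x := by
    simpa [Real.log_div hy0.ne' hx0.ne'] using Real.one_sub_inv_le_log_of_pos (div_pos hy0 hx0)
  have hrec : 1 / x - 1 / y ≤ 1 - x / y := by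
    rw [div_sub_div _ _ hx0.ne' hy0.ne', one_sub_div hy0.ne', div_le_div_iff₀ (by positivity) hy0]
    nlinarith [mul_nonneg (mul_nonneg (sub_nonneg.2 hxy) hy0.le) (sub_nonneg.2 (mem_Ici.1 hx))]
  show Real.log x + 1 / x ≤ Real.log y + 1 / y
  linarith

theorem transpose_mul_self_mul_eq_one {l m n : Type*} [Fintype l] [Fintype m] [DecidableEq m]
    [DecidableEq n] {B : Matrix l m ℝ} {C : Matrix m n ℝ} (hB : Bᵀ * B = 1) (hC : Cᵀ * C = 1) :
    (B * C)ᵀ * (B * C) = 1 := by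
  rw [transpose_mul, Matrix.mul_assoc, ← Matrix.mul_assoc Bᵀ, hB, Matrix.one_mul, hC]

theorem transpose_mul_conj_mul_of_transpose_mul_self {m n : Type*} [Fintype m] [Fintype n]
    [DecidableEq n] {W : Matrix m n ℝ} (hW : Wᵀ * W = 1) (X : Matrix n n ℝ) :
    Wᵀ * (W * X * Wᵀ) * W = X := by
  rw [← Matrix.mul_assoc, ← Matrix.mul_assoc, hW, Matrix.one_mul, Matrix.mul_assoc, hW,
    Matrix.mul_one]

theorem transpose_mul_conj_diagonal_mul_submatrix {m n p : Type*} [Fintype m] [Fintype n]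
    [DecidableEq n] [DecidableEq p] {W : Matrix m n ℝ} (hW : Wᵀ * W = 1) (d : n → ℝ) {e : p → n}
    (he : Function.Injective e) :
    (W.submatrix id e)ᵀ * (W * diagonal d * Wᵀ) * W.submatrix id e = diagonal (d ∘ e) := by
  rw [transpose_submatrix, ← submatrix_id_id (W * diagonal d * Wᵀ),
    ← submatrix_mul _ _ _ _ _ Function.bijective_id,
    ← submatrix_mul _ _ _ _ _ Function.bijective_id,
    transpose_mul_conj_mul_of_transpose_mul_self hW, submatrix_diagonal _ _ he]

theorem posSemidef_transpose_mul_diagonal_mul {ι κ : Type*} [Fintype ι] [Fintype κ]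
    [DecidableEq ι] {lam : ι → ℝ} (hlam : ∀ j, 0 ≤ lam j) (G : Matrix ι κ ℝ) :
    (Gᵀ * diagonal lam * G).PosSemidef := by
  simpa [conjTranspose_eq_transpose_of_trivial] using
    (posSemidef_diagonal_iff.mpr hlam).conjTranspose_mul_mul_same G

section Conjugation

variable {ι : Type*} [Fintype ι] [DecidableEq ι]

theorem inv_conj_of_transpose_mul_self {W : Matrix ι ι ℝ} (hW : Wᵀ * W = 1) (X : Matrix ι ι ℝ) :
    (W * X * Wᵀ)⁻¹ = W * X⁻¹ * Wᵀ := by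
  rw [Matrix.mul_inv_rev, Matrix.mul_inv_rev, inv_eq_left_inv hW,
    inv_eq_left_inv (mul_eq_one_comm.mp hW), Matrix.mul_assoc]

theorem log_det_add_trace_inv_conj_diagonal {W : Matrix ι ι ℝ} (hW : Wᵀ * W = 1) {d : ι → ℝ}
    (hd : ∀ i, d i ≠ 0) :
    Real.log (W * diagonal d * Wᵀ).det + (W * diagonal d * Wᵀ)⁻¹.trace =
      ∑ i, (Real.log (d i) + 1 / d i) := by
  have hinv : (diagonal d)⁻¹ = diagonal d⁻¹ :=
    inv_eq_left_inv (by rw [diagonal_mul_diagonal]; simp [hd])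
  rw [det_conj_of_mul_eq_one (mul_eq_one_comm.mp hW) hW, det_diagonal,
    Real.log_prod fun i _ => hd i, inv_conj_of_transpose_mul_self hW, trace_mul_cycle, hW,
    Matrix.one_mul, hinv, trace_diagonal, ← Finset.sum_add_distrib]
  simp [one_div]

theorem log_det_add_trace_inv_conj_diagonal_add_one {W : Matrix ι ι ℝ} (hW : Wᵀ * W = 1)
    {d : ι → ℝ} (hd : ∀ i, 0 ≤ d i) :
    Real.log (W * diagonal d * Wᵀ + 1).det + (W * diagonal d * Wᵀ + 1)⁻¹.trace =
      ∑ i, (Real.log (1 + d i) + 1 / (1 + d i)) := by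
  have hconj : W * diagonal d * Wᵀ + 1 = W * diagonal (fun i => 1 + d i) * Wᵀ := by
    rw [← diagonal_add, diagonal_one, Matrix.mul_add, Matrix.add_mul, Matrix.mul_one,
      mul_eq_one_comm.mp hW, add_comm]
  rw [hconj]
  exact log_det_add_trace_inv_conj_diagonal hW fun i => by linarith [hd i]

theorem log_det_add_trace_inv_diagonal_add_one {d : ι → ℝ} (hd : ∀ i, 0 ≤ d i) :
    Real.log (diagonal d + 1).det + (diagonal d + 1)⁻¹.trace =
      ∑ i, (Real.log (1 + d i) + 1 / (1 + d i)) := by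
  simpa using log_det_add_trace_inv_conj_diagonal_add_one (W := 1) (by simp) hd

end Conjugation

theorem Matrix.IsHermitian.exists_antitone_diagonalization {k : ℕ}
    {M : Matrix (Fin k) (Fin k) ℝ} (hM : M.IsHermitian) :
    ∃ (W : Matrix (Fin k) (Fin k) ℝ) (ν : Fin k → ℝ),
      Wᵀ * W = 1 ∧ Antitone ν ∧ M = W * diagonal ν * Wᵀ := by
  set U : Matrix (Fin k) (Fin k) ℝ := (hM.eigenvectorUnitary : Matrix (Fin k) (Fin k) ℝ)
  have hU : Uᵀ * U = 1 := by
    simpa [U, star_eq_conjTranspose] using Unitary.coe_star_mul_self hM.eigenvectorUnitary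
  have hMU : M = U * diagonal hM.eigenvalues * Uᵀ := by
    simpa [U, Unitary.conjStarAlgAut_apply, star_eq_conjTranspose] using hM.spectral_theorem
  set σ := Tuple.sort (OrderDual.toDual ∘ hM.eigenvalues)
  have hσ := σ.bijective
  refine ⟨U.submatrix id σ, hM.eigenvalues ∘ σ, ?_, ?_, ?_⟩
  · rw [transpose_submatrix, ← submatrix_mul _ _ _ _ _ Function.bijective_id, hU,
      submatrix_one_equiv]
  · exact monotone_toDual_comp_iff.mp (Tuple.monotone_sort (OrderDual.toDual ∘ hM.eigenvalues))
  · rw [← submatrix_diagonal_equiv, transpose_submatrix, ← submatrix_mul _ _ _ _ _ hσ,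
      ← submatrix_mul _ _ _ _ _ hσ, submatrix_id_id]
    exact hMU

section Rayleigh

variable {ι : Type*} [Fintype ι] [DecidableEq ι]

theorem dotProduct_diagonal_mulVec_self (d v : ι → ℝ) :
    v ⬝ᵥ (diagonal d *ᵥ v) = ∑ j, d j * v j ^ 2 := by
  simp only [dotProduct, mulVec_diagonal]
  exact Finset.sum_congr rfl fun j _ => by ring

theorem mul_dotProduct_self_le_dotProduct_diagonal_mulVec {d v : ι → ℝ} {a : ℝ}
    (h : ∀ j, v j ≠ 0 → a ≤ d j) : a * (v ⬝ᵥ v) ≤ v ⬝ᵥ (diagonal d *ᵥ v) := by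
  rw [dotProduct_diagonal_mulVec_self, dotProduct, Finset.mul_sum]
  refine Finset.sum_le_sum fun j _ => ?_
  rcases eq_or_ne (v j) 0 with hj | hj
  · simp [hj]
  · rw [← sq]
    exact mul_le_mul_of_nonneg_right (h j hj) (sq_nonneg _)

theorem dotProduct_diagonal_mulVec_le_mul_dotProduct_self {d v : ι → ℝ} {b : ℝ}
    (h : ∀ j, v j ≠ 0 → d j ≤ b) : v ⬝ᵥ (diagonal d *ᵥ v) ≤ b * (v ⬝ᵥ v) := by
  have := mul_dotProduct_self_le_dotProduct_diagonal_mulVec (d := fun j => -d j) (a := -b)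
    fun j hj => neg_le_neg (h j hj)
  simp only [dotProduct_diagonal_mulVec_self, neg_mul, Finset.sum_neg_distrib] at this ⊢
  linarith

end Rayleigh

theorem mulVec_dotProduct_mulVec_mulVec {ι κ : Type*} [Fintype ι] [Fintype κ]
    (G : Matrix ι κ ℝ) (N : Matrix ι ι ℝ) (v : κ → ℝ) :
    (G *ᵥ v) ⬝ᵥ (N *ᵥ (G *ᵥ v)) = v ⬝ᵥ ((Gᵀ * N * G) *ᵥ v) := by
  rw [← mulVec_mulVec, ← mulVec_mulVec, dotProduct_mulVec v Gᵀ, vecMul_transpose]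

theorem exists_ne_zero_forall_lt_mulVec_eq_zero {n k : ℕ} (G : Matrix (Fin n) (Fin k) ℝ)
    (i : Fin k) (hin : (i : ℕ) ≤ n) :
    ∃ c : Fin k → ℝ, c ≠ 0 ∧ (∀ j, i < j → c j = 0) ∧
      ∀ j : Fin n, (j : ℕ) < i → (G *ᵥ c) j = 0 := by
  let L : (Fin k → ℝ) →ₗ[ℝ] (Fin i → ℝ) × (Finset.Ioi i → ℝ) :=
    (LinearMap.funLeft ℝ ℝ (Fin.castLE hin) ∘ₗ G.mulVecLin).prod
      (LinearMap.funLeft ℝ ℝ Subtype.val)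
  have hL : LinearMap.ker L ≠ ⊥ := LinearMap.ker_ne_bot_of_finrank_lt <| by
    simp only [Module.finrank_prod, Module.finrank_fintype_fun_eq_card, Fintype.card_fin,
      Fintype.card_coe, Fin.card_Ioi]
    omega
  obtain ⟨c, hc, hc0⟩ := (Submodule.ne_bot_iff _).mp hL
  simp only [LinearMap.mem_ker, L, LinearMap.prod_apply, Function.prod, Prod.mk_eq_zero,
    funext_iff] at hc
  exact ⟨c, hc0, fun j hj => hc.2 ⟨j, Finset.mem_Ioi.mpr hj⟩, fun j hj => hc.1 ⟨j, hj⟩⟩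

theorem le_of_transpose_mul_diagonal_mul_eq_diagonal {n k : ℕ} (hkn : k ≤ n)
    {lam : Fin n → ℝ} (hlam : Antitone lam) {ν : Fin k → ℝ} (hν : Antitone ν)
    {G : Matrix (Fin n) (Fin k) ℝ} (hG : Gᵀ * G = 1)
    (hGlam : Gᵀ * diagonal lam * G = diagonal ν) (i : Fin k) :
    ν i ≤ lam (Fin.castLE hkn i) := by
  obtain ⟨c, hc0, hc, hGc⟩ := exists_ne_zero_forall_lt_mulVec_eq_zero G i (i.2.le.trans hkn)
  have hnorm : (G *ᵥ c) ⬝ᵥ (G *ᵥ c) = c ⬝ᵥ c := by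
    simpa [hG] using mulVec_dotProduct_mulVec_mulVec G 1 c
  have hquad : (G *ᵥ c) ⬝ᵥ (diagonal lam *ᵥ (G *ᵥ c)) = c ⬝ᵥ (diagonal ν *ᵥ c) := by
    rw [mulVec_dotProduct_mulVec_mulVec, hGlam]
  have hlow : ν i * (c ⬝ᵥ c) ≤ c ⬝ᵥ (diagonal ν *ᵥ c) :=
    mul_dotProduct_self_le_dotProduct_diagonal_mulVec fun j hj =>
      hν (not_lt.mp fun hij => hj (hc j hij))
  have hup : (G *ᵥ c) ⬝ᵥ (diagonal lam *ᵥ (G *ᵥ c)) ≤ lam (Fin.castLE hkn i) * (c ⬝ᵥ c) := by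
    rw [← hnorm]
    exact dotProduct_diagonal_mulVec_le_mul_dotProduct_self fun j hj =>
      hlam (Fin.le_def.mpr (not_lt.mp fun hji => hj (hGc j hji)))
  have hpos : 0 < c ⬝ᵥ c := by simpa using dotProduct_star_self_pos_iff.mpr hc0
  exact le_of_mul_le_mul_right (hlow.trans (hquad ▸ hup)) hpos

/-- The map `x ↦ log x + 1/x` is nondecreasing on `[1,∞)`. Consequently, if `Q` is a
symmetric positive semidefinite `n×n` matrix, diagonalized as `Q = U D Uᵀ` with `U`
orthogonal and eigenvalues `lam` sorted decreasingly, `A` is any `n×k` matrix with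
orthonormal columns and `V = U(:,1..k)` consists of eigenvectors for the `k` largest
eigenvalues, then
`log det(AᵀQA + I) + Tr((AᵀQA + I)⁻¹) ≤ log det(VᵀQV + I) + Tr((VᵀQV + I)⁻¹)`. -/
theorem principal_eigenvectors_maximize (n k : ℕ) (hkn : k ≤ n)
    (Q U : Matrix (Fin n) (Fin n) ℝ) (lam : Fin n → ℝ)
    (hU : Uᵀ * U = 1) (hQ : Q = U * Matrix.diagonal lam * Uᵀ)
    (hlam_anti : Antitone lam) (hlam_nonneg : ∀ i, 0 ≤ lam i)
    (A : Matrix (Fin n) (Fin k) ℝ) (hA : Aᵀ * A = 1)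
    (V : Matrix (Fin n) (Fin k) ℝ) (hV : V = U.submatrix id (Fin.castLE hkn)) :
    MonotoneOn (fun x : ℝ => Real.log x + 1 / x) (Ici 1) ∧
      Real.log (Aᵀ * Q * A + 1).det + (Aᵀ * Q * A + 1)⁻¹.trace ≤
        Real.log (Vᵀ * Q * V + 1).det + (Vᵀ * Q * V + 1)⁻¹.trace := by
  refine ⟨monotoneOn_log_add_one_div, ?_⟩
  subst hQ hV
  set B := Uᵀ * A
  have hB : Bᵀ * B = 1 :=
    transpose_mul_self_mul_eq_one (by rw [transpose_transpose, mul_eq_one_comm, hU]) hA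
  obtain ⟨W, ν, hW, hν, hdecomp⟩ := (posSemidef_transpose_mul_diagonal_mul hlam_nonneg
    B).isHermitian.exists_antitone_diagonalization
  have hGlam : (B * W)ᵀ * diagonal lam * (B * W) = diagonal ν := by
    rw [transpose_mul, ← transpose_mul_conj_mul_of_transpose_mul_self hW (diagonal ν), ← hdecomp]
    simp only [Matrix.mul_assoc]
  have hν_nonneg : ∀ i, 0 ≤ ν i := posSemidef_diagonal_iff.mp
    (hGlam ▸ posSemidef_transpose_mul_diagonal_mul hlam_nonneg (B * W))
  have hAQA : Aᵀ * (U * diagonal lam * Uᵀ) * A = W * diagonal ν * Wᵀ := by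
    rw [← hdecomp]
    simp only [B, transpose_mul, transpose_transpose, Matrix.mul_assoc]
  rw [hAQA, transpose_mul_conj_diagonal_mul_submatrix hU lam (Fin.castLE_injective hkn),
    log_det_add_trace_inv_conj_diagonal_add_one hW hν_nonneg,
    log_det_add_trace_inv_diagonal_add_one (d := lam ∘ Fin.castLE hkn) fun i => hlam_nonneg _]
  refine Finset.sum_le_sum fun i _ => monotoneOn_log_add_one_div ?_ ?_ ?_
  · simpa using hν_nonneg i
  · simpa using hlam_nonneg (Fin.castLE hkn i)
  · simpa using le_of_transpose_mul_diagonal_mul_eq_diagonal hkn hlam_anti hν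
      (transpose_mul_self_mul_eq_one hB hW) hGlam i
end

section
/- Let F be a distribution function with bounded support contained in [0, M]. Define b(x) = ∫ dF(t)/(t + x) for x > 0 (the Stieltjes transform evaluated at -x). Then ∫ log(1+t) dF(t) = ∫_1^∞ (1/t - b(t)) dt. -/
/-!
For `t ≥ 0` the integrand `x⁻¹ - (t + x)⁻¹` is nonnegative with antiderivative
`log x - log (t + x)`, which tends to `0` at infinity, so
`∫_1^∞ (x⁻¹ - (t + x)⁻¹) dx = log (1 + t)`.
Integrating in `t` and swapping the two integrals (Tonelli–Fubini, the integrand being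
nonnegative with integrable `x`-integral) gives the identity, since `∫ x⁻¹ dμ = x⁻¹` for a
probability measure.
-/

open MeasureTheory Set Filter Topology

namespace Real

lemma inv_sub_inv_add_nonneg {t x : ℝ} (ht : 0 ≤ t) (hx : 0 < x) :
    0 ≤ x⁻¹ - (t + x)⁻¹ :=
  sub_nonneg.2 (inv_anti₀ hx (le_add_of_nonneg_left ht))

lemma hasDerivAt_log_sub_log_add {t x : ℝ} (ht : 0 ≤ t) (hx : 0 < x) :
    HasDerivAt (fun y => log y - log (t + y)) (x⁻¹ - (t + x)⁻¹) x := by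
  have h : HasDerivAt (fun y => log (t + y)) (t + x)⁻¹ x := by
    simpa using ((hasDerivAt_id x).const_add t).log (by positivity)
  exact (hasDerivAt_log hx.ne').sub h

lemma tendsto_log_sub_log_add_atTop (t : ℝ) :
    Tendsto (fun y => log y - log (t + y)) atTop (𝓝 0) := by
  simpa [add_comm t] using (tendsto_log_comp_add_sub_log t).neg

lemma integrableOn_Ioi_inv_sub_inv_add {t a : ℝ} (ht : 0 ≤ t) (ha : 0 < a) :
    IntegrableOn (fun x => x⁻¹ - (t + x)⁻¹) (Ioi a) :=
  integrableOn_Ioi_deriv_of_nonneg'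
    (fun _ hx => hasDerivAt_log_sub_log_add ht (ha.trans_le hx))
    (fun _ hx => inv_sub_inv_add_nonneg ht (ha.trans hx)) (tendsto_log_sub_log_add_atTop t)

lemma integral_Ioi_inv_sub_inv_add {t a : ℝ} (ht : 0 ≤ t) (ha : 0 < a) :
    ∫ x in Ioi a, (x⁻¹ - (t + x)⁻¹) = log (t + a) - log a := by
  rw [integral_Ioi_of_hasDerivAt_of_nonneg'
    (fun _ hx => hasDerivAt_log_sub_log_add ht (ha.trans_le hx))
    (fun _ hx => inv_sub_inv_add_nonneg ht (ha.trans hx)) (tendsto_log_sub_log_add_atTop t)]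
  ring

end Real

open Real

lemma integral_log_one_add_eq_integral_Ioi_integral {μ : Measure ℝ} [SFinite μ]
    (hpos : ∀ᵐ t ∂μ, 0 ≤ t) (hlog : Integrable (fun t => log (1 + t)) μ) :
    ∫ t, log (1 + t) ∂μ = ∫ x in Ioi (1 : ℝ), ∫ t, (x⁻¹ - (t + x)⁻¹) ∂μ := by
  have hinner : ∀ᵐ t ∂μ, ∫ x in Ioi (1 : ℝ), (x⁻¹ - (t + x)⁻¹) = log (1 + t) := by
    filter_upwards [hpos] with t ht
    rw [integral_Ioi_inv_sub_inv_add ht one_pos, log_one, sub_zero, add_comm]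
  have hmeas : AEStronglyMeasurable (Function.uncurry fun t x : ℝ => x⁻¹ - (t + x)⁻¹)
      (μ.prod (volume.restrict (Ioi 1))) :=
    (measurable_snd.inv.sub (measurable_fst.add measurable_snd).inv).aestronglyMeasurable
  have hint : Integrable (Function.uncurry fun t x : ℝ => x⁻¹ - (t + x)⁻¹)
      (μ.prod (volume.restrict (Ioi 1))) := by
    refine (integrable_prod_iff hmeas).2 ⟨?_, hlog.congr ?_⟩
    · filter_upwards [hpos] with t ht
      exact integrableOn_Ioi_inv_sub_inv_add ht one_pos
    · filter_upwards [hpos, hinner] with t ht hlog_eq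
      rw [← hlog_eq]
      refine setIntegral_congr_fun measurableSet_Ioi fun x hx => ?_
      exact (norm_of_nonneg (inv_sub_inv_add_nonneg ht (one_pos.trans hx))).symm
  rw [← integral_integral_swap hint]
  exact integral_congr_ae (hinner.mono fun t ht => ht.symm)

lemma integrable_inv_add_const {μ : Measure ℝ} [IsFiniteMeasure μ]
    (hpos : ∀ᵐ t ∂μ, 0 ≤ t) {x : ℝ} (hx : 0 < x) :
    Integrable (fun t => (t + x)⁻¹) μ := by
  refine Integrable.mono' (integrable_const x⁻¹)
    (measurable_id.add_const x).inv.aestronglyMeasurable ?_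
  filter_upwards [hpos] with t ht
  rw [norm_of_nonneg (by positivity)]
  exact inv_anti₀ hx (le_add_of_nonneg_left ht)

theorem log_moment_eq_integral_stieltjes_general (M : ℝ)
    (μ : Measure ℝ) [IsProbabilityMeasure μ] (hsupp : μ (Icc 0 M)ᶜ = 0) :
    (∫ t, Real.log (1 + t) ∂μ) =
      ∫ x in Ioi (1 : ℝ), (1 / x - ∫ t, (t + x)⁻¹ ∂μ) := by
  have hmem : ∀ᵐ t ∂μ, t ∈ Icc 0 M :=
    (measure_eq_zero_iff_ae_notMem.1 hsupp).mono fun _ h => not_not.1 h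
  have hpos : ∀ᵐ t ∂μ, 0 ≤ t := hmem.mono fun _ ht => ht.1
  have hlog : Integrable (fun t => log (1 + t)) μ := by
    refine Integrable.mono' (integrable_const (log (1 + M)))
      (measurable_log.comp (measurable_const.add measurable_id)).aestronglyMeasurable ?_
    filter_upwards [hmem] with t ⟨ht0, htM⟩
    rw [norm_of_nonneg (log_nonneg (by linarith))]
    exact log_le_log (by linarith) (by linarith)
  rw [integral_log_one_add_eq_integral_Ioi_integral hpos hlog]
  refine setIntegral_congr_fun measurableSet_Ioi fun x hx => ?_
  rw [integral_sub (integrable_const _) (integrable_inv_add_const hpos (one_pos.trans hx)),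
    integral_const, probReal_univ, one_smul, one_div]

/-- If `μ` is a probability measure on `ℝ` supported in `[0,M]`, with Stieltjes-type
transform `b(x) = ∫ (t+x)⁻¹ dμ(t)` for `x > 0`, then
`∫ log(1+t) dμ(t) = ∫_1^∞ (1/x - b(x)) dx`. -/
theorem log_moment_eq_integral_stieltjes (M : ℝ) (hM : 0 ≤ M)
    (μ : Measure ℝ) [IsProbabilityMeasure μ] (hsupp : μ (Icc 0 M)ᶜ = 0) :
    (∫ t, Real.log (1 + t) ∂μ) =
      ∫ x in Ioi (1 : ℝ), (1 / x - ∫ t, (t + x)⁻¹ ∂μ) :=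
  log_moment_eq_integral_stieltjes_general M μ hsupp
end
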